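/- Every Q-SOS refutation of the Parity_n formulas has existential Q-degree at least n, and hence Q-size 2^{Ω(n)}. -/

import Mathlib

open MvPolynomial

/-- The rational value of a Boolean. -/
noncomputable def bval (b : Bool) : ℚ := if b then 1 else 0

/-- A Q-SOS refutation of a QBF over variables `Fin n` (in prefix order), with
existential variables marked by `E` and matrix encoded by the polynomials in `P`:
an identity `Σ_{p∈P} q_p·p + Σ_u q_u·(1-2u) + Σ s² + 1 = 0` where each `q_u`
(for universal `u`) only mentions variables left of `u`. -/
structure QSOS (n : ℕ) (E : Fin n → Bool) (P : Finset (MvPolynomial (Fin n) ℚ)) where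
  qp : MvPolynomial (Fin n) ℚ → MvPolynomial (Fin n) ℚ
  qu : Fin n → MvPolynomial (Fin n) ℚ
  sq : Multiset (MvPolynomial (Fin n) ℚ)
  hvars : ∀ u : Fin n, E u = false → ∀ v ∈ (qu u).vars, v < u
  huz : ∀ u : Fin n, E u = true → qu u = 0
  hid : ∑ p ∈ P, qp p * p
      + ∑ u : Fin n, qu u * (1 - 2 * X u)
      + (sq.map fun s => s ^ 2).sum + 1 = 0

/-- Q-size of a Q-SOS refutation: the number of monomials in the `q_u` polynomials. -/
noncomputable def QSOS.qsize {n : ℕ} {E : Fin n → Bool}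
    {P : Finset (MvPolynomial (Fin n) ℚ)} (π : QSOS n E P) : ℕ :=
  ∑ u : Fin n, (π.qu u).support.card

/-- Existential Q-degree of a Q-SOS refutation: the largest number of existential
variables (with multiplicity) in a monomial of some `q_u`. -/
noncomputable def QSOS.exdeg {n : ℕ} {E : Fin n → Bool}
    {P : Finset (MvPolynomial (Fin n) ℚ)} (π : QSOS n E P) : ℕ :=
  Finset.univ.sup fun u : Fin n =>
    (π.qu u).support.sup fun m => ∑ i ∈ Finset.univ.filter (fun i => E i = true), m i

/-! The Parity_n formulas: `∃x₁…x_n ∀u ∃t₁…t_n. (t₁ ↔ x₁) ∧ (u ↮ t_n) ∧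
⋀_{i≥2} (t_i ↔ t_{i-1} ⊕ x_i)`, over variables `Fin (2n+1)` in prefix order:
`x_i` at position `i` (`0 ≤ i < n`), `u` at position `n`, `t_i` at position `n+1+i`. -/

/-- Index of `x_i`. -/
def pxIdx (n : ℕ) (i : Fin n) : Fin (2 * n + 1) := ⟨i, by have := i.isLt; omega⟩

/-- Index of `u`. -/
def puIdx (n : ℕ) : Fin (2 * n + 1) := ⟨n, by omega⟩

/-- Index of `t_i`. -/
def ptIdx (n : ℕ) (i : Fin n) : Fin (2 * n + 1) := ⟨n + 1 + i, by have := i.isLt; omega⟩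

/-- The polynomial encoding the constraint defining `t_i`:
`t₁ ↔ x₁` for `i = 0`, and `t_i ↔ t_{i-1} ⊕ x_i` otherwise. -/
noncomputable def parityConstraint (n : ℕ) (i : Fin n) : MvPolynomial (Fin (2 * n + 1)) ℚ :=
  if (i : ℕ) = 0 then X (ptIdx n i) - X (pxIdx n i)
  else X (ptIdx n i) - (X (ptIdx n ⟨(i : ℕ) - 1, by have := i.isLt; omega⟩) + X (pxIdx n i)
    - 2 * X (ptIdx n ⟨(i : ℕ) - 1, by have := i.isLt; omega⟩) * X (pxIdx n i))

open Classical in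
/-- The polynomial encoding of the matrix of `Parity_n`: the Boolean axioms, the
`t_i`-constraints, and the clause `u ↮ t_n` (encoded as `u + t_n - 1`). -/
noncomputable def parityEnc (n : ℕ) : Finset (MvPolynomial (Fin (2 * n + 1)) ℚ) :=
  (Finset.univ.image fun v : Fin (2 * n + 1) => X v ^ 2 - X v)
    ∪ (Finset.univ.image (parityConstraint n))
    ∪ {X (puIdx n) + X (⟨2 * n, by omega⟩ : Fin (2 * n + 1)) - 1}

/-- The existential variables of `Parity_n`: everything except `u`. -/
def parityE (n : ℕ) (v : Fin (2 * n + 1)) : Bool := !decide ((v : ℕ) = n)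

/-!
At the universal countermodel (`x` arbitrary, `t_i` the prefix parities, `u = ¬ t_n`) every
axiom vanishes, so evaluating the refutation identity leaves
`(-1)^{|x|} q_u(x) = 1 + Σ s(x)² > 0`: the polynomial `q_u`, which only mentions `x`,
sign-represents parity on the whole cube. Summing `(-1)^{|T|} q_u(1_T)` over `T ⊆ S` gives a
nonzero number to which only monomials with support exactly `S` contribute, so `q_u` has such a
monomial for every `S ⊆ {x_1, …, x_n}`. Taking `S` to be all inputs gives existential degree
`≥ n`, and counting gives at least `2^n` monomials.
-/

namespace MvPolynomial

variable {ι R : Type*} [DecidableEq ι] [CommRing R]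

def cubeVertex (T : Finset ι) : ι → R := fun i => if i ∈ T then 1 else 0

theorem eval_cubeVertex (T : Finset ι) (q : MvPolynomial ι R) :
    eval (cubeVertex T) q = ∑ d ∈ q.support, q.coeff d * if d.support ⊆ T then 1 else 0 := by
  rw [eval_eq]
  refine Finset.sum_congr rfl fun d _ => ?_
  have hfactor : ∀ i ∈ d.support, cubeVertex T i ^ d i = (if i ∈ T then 1 else 0 : R) := by
    intro i hi
    unfold cubeVertex
    split_ifs <;> simp [Finsupp.mem_support_iff.mp hi]
  rw [Finset.prod_congr rfl hfactor, Finset.prod_boole]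
  rfl

theorem sum_powerset_neg_one_pow_card_mul_boole_subset {A S : Finset ι} (hAS : A ≠ S) :
    ∑ T ∈ S.powerset, (-1 : R) ^ T.card * (if A ⊆ T then 1 else 0) = 0 := by
  by_cases hsub : A ⊆ S
  · obtain ⟨i, hiS, hiA⟩ := Finset.exists_of_ssubset (lt_of_le_of_ne hsub hAS)
    rw [← Finset.insert_erase hiS, Finset.sum_powerset_insert (Finset.notMem_erase i S),
      ← Finset.sum_add_distrib]
    refine Finset.sum_eq_zero fun T hT => ?_
    have hiT : i ∉ T := fun h => Finset.notMem_erase i S (Finset.mem_powerset.mp hT h)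
    have hA : A ⊆ insert i T ↔ A ⊆ T :=
      ⟨fun h a ha => (Finset.mem_insert.mp (h ha)).resolve_left (by rintro rfl; exact hiA ha),
        fun h => h.trans (Finset.subset_insert i T)⟩
    simp only [hA, Finset.card_insert_of_notMem hiT, pow_succ]
    ring
  · refine Finset.sum_eq_zero fun T hT => ?_
    rw [if_neg fun h => hsub (h.trans (Finset.mem_powerset.mp hT)), mul_zero]

/-- Up to the sign `(-1) ^ #S`, the left side is the coefficient of `∏_{i ∈ S} X i` in the
multilinear reduction of `q`. -/
theorem sum_powerset_neg_one_pow_card_mul_eval_cubeVertex {q : MvPolynomial ι R} {S : Finset ι}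
    (hq : ∀ d ∈ q.support, d.support ≠ S) :
    ∑ T ∈ S.powerset, (-1 : R) ^ T.card * eval (cubeVertex T) q = 0 := by
  simp only [eval_cubeVertex, Finset.mul_sum]
  rw [Finset.sum_comm]
  refine Finset.sum_eq_zero fun d hd => ?_
  simp only [mul_left_comm _ (q.coeff d), ← Finset.mul_sum,
    sum_powerset_neg_one_pow_card_mul_boole_subset (hq d hd), mul_zero]

variable [LinearOrder R] [IsStrictOrderedRing R]

theorem exists_mem_support_support_eq_of_sign {q : MvPolynomial ι R} {S : Finset ι}
    (hsign : ∀ T ⊆ S, 0 < (-1 : R) ^ T.card * eval (cubeVertex T) q) :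
    ∃ d ∈ q.support, d.support = S := by
  by_contra! hq
  have hpos : 0 < ∑ T ∈ S.powerset, (-1 : R) ^ T.card * eval (cubeVertex T) q :=
    Finset.sum_pos (fun T hT => hsign T (Finset.mem_powerset.mp hT))
      ⟨∅, Finset.empty_mem_powerset S⟩
  exact hpos.ne' (sum_powerset_neg_one_pow_card_mul_eval_cubeVertex hq)

theorem two_pow_card_le_card_support_of_sign {q : MvPolynomial ι R} {A : Finset ι}
    (hsign : ∀ T ⊆ A, 0 < (-1 : R) ^ T.card * eval (cubeVertex T) q) :
    2 ^ A.card ≤ q.support.card := by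
  rw [← Finset.card_powerset]
  refine Finset.card_le_card_of_surjOn Finsupp.support fun S hS => ?_
  obtain ⟨d, hd, rfl⟩ := exists_mem_support_support_eq_of_sign
    fun T hT => hsign T (hT.trans (Finset.mem_powerset.mp hS))
  exact ⟨d, hd, rfl⟩

end MvPolynomial

namespace QSOS

variable {N : ℕ} {E : Fin N → Bool} {P : Finset (MvPolynomial (Fin N) ℚ)} (π : QSOS N E P)

/-- Evaluating the refutation identity at a point satisfying the matrix leaves
`Σ_u q_u(ρ)·(1 - 2ρ_u) = -1 - Σ s(ρ)²`. -/
theorem sum_eval_qu_mul_le_neg_one {ρ : Fin N → ℚ} (hρ : ∀ p ∈ P, eval ρ p = 0) :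
    ∑ u, eval ρ (π.qu u) * (1 - 2 * ρ u) ≤ -1 := by
  have hid := congrArg (eval ρ) π.hid
  simp only [map_add, map_sum, map_mul, map_sub, map_one, map_zero, map_ofNat, eval_X,
    map_multiset_sum, Multiset.map_map, Function.comp_def, map_pow] at hid
  rw [Finset.sum_eq_zero fun p hp => by rw [hρ p hp, mul_zero]] at hid
  have hsq : 0 ≤ (π.sq.map fun s => eval ρ s ^ 2).sum :=
    Multiset.sum_nonneg fun _ hx => by
      obtain ⟨s, _, rfl⟩ := Multiset.mem_map.mp hx
      positivity
  linarith

theorem eval_qu_eq_of_eq_on_lt {u : Fin N} (hu : E u = false) {ρ₁ ρ₂ : Fin N → ℚ}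
    (hρ : ∀ v < u, ρ₁ v = ρ₂ v) : eval ρ₁ (π.qu u) = eval ρ₂ (π.qu u) :=
  eval₂Hom_congr' rfl (fun v hv _ => hρ v (π.hvars u hu v hv)) rfl

theorem le_exdeg {u : Fin N} {d : Fin N →₀ ℕ} (hd : d ∈ (π.qu u).support) :
    ∑ i ∈ Finset.univ.filter (fun i => E i = true), d i ≤ π.exdeg :=
  Finset.le_sup_of_le (Finset.mem_univ u) <|
    Finset.le_sup (f := fun d : Fin N →₀ ℕ => ∑ i ∈ Finset.univ.filter (fun i => E i = true), d i)
      hd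

theorem card_support_qu_le_qsize (u : Fin N) : (π.qu u).support.card ≤ π.qsize :=
  Finset.single_le_sum (f := fun u => (π.qu u).support.card) (fun _ _ => Nat.zero_le _)
    (Finset.mem_univ u)

end QSOS

section PrefixParity

variable {N : ℕ}

def prefixSign (T : Finset (Fin N)) (k : ℕ) : ℚ :=
  (-1) ^ (T.filter fun v : Fin N => (v : ℕ) < k).card

def prefixParity (T : Finset (Fin N)) (k : ℕ) : ℚ := (1 - prefixSign T k) / 2

theorem prefixSign_zero (T : Finset (Fin N)) : prefixSign T 0 = 1 := by
  simp [prefixSign]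

theorem prefixSign_sq (T : Finset (Fin N)) (k : ℕ) : prefixSign T k ^ 2 = 1 := by
  rw [prefixSign, ← pow_mul, mul_comm, pow_mul, neg_one_sq, one_pow]

theorem prefixSign_of_forall_lt {T : Finset (Fin N)} {k : ℕ} (hT : ∀ v ∈ T, (v : ℕ) < k) :
    prefixSign T k = (-1) ^ T.card := by
  rw [prefixSign, Finset.filter_true_of_mem hT]

theorem prefixSign_succ (T : Finset (Fin N)) (v : Fin N) :
    prefixSign T (v + 1) = prefixSign T v * (1 - 2 * cubeVertex T v) := by
  unfold prefixSign cubeVertex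
  by_cases hv : v ∈ T
  · have hsplit : (T.filter fun w : Fin N => (w : ℕ) < v + 1)
        = insert v (T.filter fun w : Fin N => (w : ℕ) < v) := by
      ext w
      simp only [Finset.mem_filter, Finset.mem_insert]
      grind
    rw [hsplit, Finset.card_insert_of_notMem (by simp), if_pos hv, pow_succ]
    ring
  · have hsplit : (T.filter fun w : Fin N => (w : ℕ) < v + 1)
        = T.filter fun w : Fin N => (w : ℕ) < v := by
      ext w
      simp only [Finset.mem_filter]
      grind
    rw [hsplit, if_neg hv]
    ring

theorem prefixParity_zero (T : Finset (Fin N)) : prefixParity T 0 = 0 := by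
  simp [prefixParity, prefixSign_zero]

theorem prefixParity_sq (T : Finset (Fin N)) (k : ℕ) :
    prefixParity T k ^ 2 = prefixParity T k := by
  have := prefixSign_sq T k
  unfold prefixParity
  linear_combination this / 4

/-- `t_{v+1} = t_v ⊕ x_v`, in the arithmetic form used by `parityConstraint`. -/
theorem prefixParity_succ (T : Finset (Fin N)) (v : Fin N) :
    prefixParity T (v + 1) = prefixParity T v + cubeVertex T v
      - 2 * prefixParity T v * cubeVertex T v := by
  unfold prefixParity
  rw [prefixSign_succ]
  ring

end PrefixParity

section ParityCountermodel

variable {n : ℕ}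

/-- The universal countermodel of `Parity_n` at the input vertex `T`: `x = T`, `t_i` the parity
of `x_1, …, x_i`, and `u = ¬ t_n`. -/
def parityCountermodel (T : Finset (Fin (2 * n + 1))) (v : Fin (2 * n + 1)) : ℚ :=
  if (v : ℕ) < n then cubeVertex T v
  else if (v : ℕ) = n then 1 - prefixParity T n
  else prefixParity T (v - n)

theorem parityCountermodel_sq (T : Finset (Fin (2 * n + 1))) (v : Fin (2 * n + 1)) :
    parityCountermodel T v ^ 2 = parityCountermodel T v := by
  unfold parityCountermodel
  split_ifs
  · unfold cubeVertex
    split_ifs <;> norm_num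
  · linear_combination prefixParity_sq T n
  · exact prefixParity_sq T _

theorem parityCountermodel_pxIdx (T : Finset (Fin (2 * n + 1))) (i : Fin n) :
    parityCountermodel T (pxIdx n i) = cubeVertex T (pxIdx n i) :=
  if_pos i.isLt

theorem parityCountermodel_puIdx (T : Finset (Fin (2 * n + 1))) :
    parityCountermodel T (puIdx n) = 1 - prefixParity T n := by
  simp [parityCountermodel, puIdx]

theorem parityCountermodel_ptIdx (T : Finset (Fin (2 * n + 1))) (i : Fin n) :
    parityCountermodel T (ptIdx n i) = prefixParity T (i + 1) := by
  have hv : ((ptIdx n i : Fin (2 * n + 1)) : ℕ) = n + 1 + i := rfl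
  rw [parityCountermodel, if_neg (by omega), if_neg (by omega), hv]
  congr 1
  omega

theorem parityCountermodel_last (hn : 0 < n) (T : Finset (Fin (2 * n + 1))) :
    parityCountermodel T ⟨2 * n, by omega⟩ = prefixParity T n := by
  rw [parityCountermodel, if_neg (by simp; omega), if_neg (by simp; omega)]
  congr 1
  simp only
  omega

theorem eval_parityConstraint_parityCountermodel (T : Finset (Fin (2 * n + 1))) (i : Fin n) :
    eval (parityCountermodel T) (parityConstraint n i) = 0 := by
  unfold parityConstraint
  have hstep : prefixParity T (i + 1) = prefixParity T i + cubeVertex T (pxIdx n i)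
      - 2 * prefixParity T i * cubeVertex T (pxIdx n i) := prefixParity_succ T (pxIdx n i)
  split_ifs with hi
  · simp only [map_sub, eval_X, parityCountermodel_ptIdx, parityCountermodel_pxIdx]
    rw [hstep, hi, prefixParity_zero]
    ring
  · simp only [map_sub, map_add, map_mul, map_ofNat, eval_X, parityCountermodel_ptIdx,
      parityCountermodel_pxIdx, Nat.sub_add_cancel (Nat.pos_of_ne_zero hi)]
    exact sub_eq_zero.mpr hstep

theorem eval_parityEnc_parityCountermodel (hn : 0 < n) (T : Finset (Fin (2 * n + 1))) :
    ∀ p ∈ parityEnc n, eval (parityCountermodel T) p = 0 := by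
  intro p hp
  simp only [parityEnc, Finset.mem_union, Finset.mem_image, Finset.mem_univ, true_and,
    Finset.mem_singleton] at hp
  rcases hp with (⟨v, rfl⟩ | ⟨i, rfl⟩) | rfl
  · simp [parityCountermodel_sq]
  · exact eval_parityConstraint_parityCountermodel T i
  · simp only [map_sub, map_add, map_one, eval_X, parityCountermodel_puIdx,
      parityCountermodel_last hn]
    ring

end ParityCountermodel

section ParityLowerBounds

variable {n : ℕ}

def parityInputs (n : ℕ) : Finset (Fin (2 * n + 1)) := Finset.univ.filter fun v => (v : ℕ) < n

theorem card_parityInputs (n : ℕ) : (parityInputs n).card = n := by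
  rw [parityInputs, Fin.card_filter_val_lt]
  omega

/-- Strategy extraction: the `u`-polynomial of a refutation sign-represents parity on the inputs. -/
theorem neg_one_pow_card_mul_eval_qu_pos (hn : 0 < n)
    (π : QSOS (2 * n + 1) (parityE n) (parityEnc n)) {T : Finset (Fin (2 * n + 1))}
    (hT : T ⊆ parityInputs n) :
    0 < (-1) ^ T.card * eval (cubeVertex T) (π.qu (puIdx n)) := by
  have hu : parityE n (puIdx n) = false := by simp [parityE, puIdx]
  have hextract := π.sum_eval_qu_mul_le_neg_one (eval_parityEnc_parityCountermodel hn T)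
  rw [Finset.sum_eq_single (puIdx n) (fun v _ hv => by
      rw [π.huz v (by simpa [parityE, puIdx, Fin.ext_iff] using hv), map_zero, zero_mul])
      (by simp)] at hextract
  rw [π.eval_qu_eq_of_eq_on_lt hu (ρ₁ := parityCountermodel T) (ρ₂ := cubeVertex T)
      fun v hv => if_pos hv, parityCountermodel_puIdx, prefixParity,
    prefixSign_of_forall_lt fun v hv => (Finset.mem_filter.mp (hT hv)).2] at hextract
  linarith

theorem le_exdeg_of_parity (hn : 0 < n) (π : QSOS (2 * n + 1) (parityE n) (parityEnc n)) :
    n ≤ π.exdeg := by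
  obtain ⟨d, hd, hsupp⟩ := exists_mem_support_support_eq_of_sign
    fun T hT => neg_one_pow_card_mul_eval_qu_pos hn π hT
  have hinputs : parityInputs n ⊆ Finset.univ.filter fun v => parityE n v = true := by
    intro v hv
    simp only [parityInputs, Finset.mem_filter, Finset.mem_univ, true_and] at hv ⊢
    simp [parityE, hv.ne]
  calc n = ∑ _v ∈ parityInputs n, 1 := by simp [card_parityInputs]
    _ ≤ ∑ v ∈ parityInputs n, d v := Finset.sum_le_sum fun v hv =>
        Nat.one_le_iff_ne_zero.mpr (Finsupp.mem_support_iff.mp (hsupp ▸ hv))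
    _ ≤ ∑ v ∈ Finset.univ.filter fun v => parityE n v = true, d v :=
        Finset.sum_le_sum_of_subset hinputs
    _ ≤ π.exdeg := π.le_exdeg hd

theorem two_pow_le_qsize_of_parity (hn : 0 < n) (π : QSOS (2 * n + 1) (parityE n) (parityEnc n)) :
    2 ^ n ≤ π.qsize :=
  calc 2 ^ n = 2 ^ (parityInputs n).card := by rw [card_parityInputs]
    _ ≤ (π.qu (puIdx n)).support.card :=
        two_pow_card_le_card_support_of_sign fun T hT => neg_one_pow_card_mul_eval_qu_pos hn π hT
    _ ≤ π.qsize := π.card_support_qu_le_qsize _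

end ParityLowerBounds

theorem stmt_14 :
    (∀ n : ℕ, ∀ π : QSOS (2 * n + 1) (parityE n) (parityEnc n), n ≤ π.exdeg) ∧
    ∃ c : ℝ, 0 < c ∧ ∃ N : ℕ, ∀ n : ℕ, N ≤ n →
      ∀ π : QSOS (2 * n + 1) (parityE n) (parityEnc n),
        Real.exp (c * n) ≤ (π.qsize : ℝ) := by
  refine ⟨fun n π => ?_, Real.log 2, Real.log_pos one_lt_two, 1, fun n hn π => ?_⟩
  · rcases Nat.eq_zero_or_pos n with rfl | hn
    · exact Nat.zero_le _
    · exact le_exdeg_of_parity hn π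
  · calc Real.exp (Real.log 2 * n) = 2 ^ n := by
          rw [mul_comm, Real.exp_nat_mul, Real.exp_log two_pos]
      _ ≤ π.qsize := by exact_mod_cast two_pow_le_qsize_of_parity hn π
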